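/- Given coefficients p₀,…,p₆ ∈ ℂ and λ₀ ∈ ℝ with λ₀ ≠ i (i.e., i ∉ ℝ), there exist unique a₄,…,a₁₀ ∈ ℂ such that the rational function g₀(λ) = Σ_{j=4}^{10} aⱼ/(λ-i)^j satisfies g₀(λ) = Σ_{j=0}^{6} pⱼ(λ-λ₀)^j + O((λ-λ₀)⁷) as λ → λ₀, i.e., the Taylor expansion of g₀ at λ₀ matches the given polynomial to order 6. -/

import Mathlib

/-!
The `n`-th derivative of `(λ - i) ^ (-k)` at `λ₀` is `(-k)(-k-1)⋯(-k-n+1) (λ₀ - i) ^ (-k-n)`, so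
matching Taylor coefficients is a linear system in `a₄, …, a₁₀`. Up to diagonal factors that are
powers of `λ₀ - i ≠ 0`, its matrix evaluates the monic falling-factorial polynomials of degrees
`0, …, 6` at the distinct nodes `-4, …, -10`; such a matrix has the Vandermonde determinant of the
nodes, so the system is uniquely solvable.
-/

open Complex
open scoped Matrix

section ZPowJet

variable {𝕜 : Type*} [NontriviallyNormedField 𝕜] {N : ℕ}

theorem contDiffAt_zpow_sub_const {w x : 𝕜} (hx : x ≠ w) (m : ℤ) (n : ℕ) :
    ContDiffAt 𝕜 n (fun l => (l - w) ^ m) x := by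
  have hsub : ContDiffAt 𝕜 n (fun l => l - w) x := contDiffAt_id.sub contDiffAt_const
  obtain ⟨k, rfl | rfl⟩ := Int.eq_nat_or_neg m
  · simpa only [zpow_natCast] using hsub.pow k
  · simp only [zpow_neg, zpow_natCast]
    exact (hsub.pow k).inv (pow_ne_zero k (sub_ne_zero.2 hx))

theorem iteratedDeriv_zpow_sub_const (w : 𝕜) (m : ℤ) (n : ℕ) (x : 𝕜) :
    iteratedDeriv n (fun l => (l - w) ^ m) x
      = (descPochhammer 𝕜 n).eval (m : 𝕜) * (x - w) ^ (m - n) := by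
  rw [iteratedDeriv_comp_sub_const (f := fun y => y ^ m)]
  dsimp only
  rw [iteratedDeriv_eq_iterate, iter_deriv_zpow, descPochhammer_eval_eq_prod_range]

/-- Entry `(n, j)` is the `n`-th derivative of `y ↦ y ^ m j` at `c`. -/
noncomputable def zpowJetMatrix (m : Fin N → ℤ) (c : 𝕜) : Matrix (Fin N) (Fin N) 𝕜 :=
  Matrix.of fun (n : Fin N) j => (descPochhammer 𝕜 n).eval (m j : 𝕜) * c ^ (m j - n)

theorem iteratedDeriv_sum_zpow_sub_const {w x : 𝕜} (hx : x ≠ w) (m : Fin N → ℤ)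
    (a : Fin N → 𝕜) (n : Fin N) :
    iteratedDeriv n (fun l => ∑ j, a j * (l - w) ^ m j) x = (zpowJetMatrix m (x - w) *ᵥ a) n := by
  simp only [Matrix.mulVec, dotProduct, zpowJetMatrix, Matrix.of_apply]
  rw [iteratedDeriv_fun_sum fun j _ => contDiffAt_const.mul (contDiffAt_zpow_sub_const hx _ _)]
  refine Finset.sum_congr rfl fun j _ => ?_
  rw [iteratedDeriv_const_mul_field, iteratedDeriv_zpow_sub_const, mul_comm]

theorem zpowJetMatrix_eq_diagonal_mul_mul_diagonal (m : Fin N → ℤ) {c : 𝕜} (hc : c ≠ 0) :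
    zpowJetMatrix m c = Matrix.diagonal (fun n : Fin N => c ^ (-(n : ℤ))) *
      (Matrix.of fun (n : Fin N) j => (descPochhammer 𝕜 n).eval (m j : 𝕜)) *
      Matrix.diagonal (fun j => c ^ m j) := by
  ext n j
  simp only [zpowJetMatrix, Matrix.mul_diagonal, Matrix.diagonal_mul, Matrix.of_apply,
    sub_eq_neg_add, zpow_add₀ hc]
  ring

theorem det_zpowJetMatrix_ne_zero [CharZero 𝕜] {m : Fin N → ℤ} (hm : m.Injective) {c : 𝕜}
    (hc : c ≠ 0) : (zpowJetMatrix m c).det ≠ 0 := by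
  have hpoch : (Matrix.of fun (n : Fin N) j => (descPochhammer 𝕜 n).eval (m j : 𝕜)).det
      = (Matrix.vandermonde fun j => (m j : 𝕜)).det := by
    rw [Matrix.det_eval_matrixOfPolynomials_eq_det_vandermonde _ _
      (fun n => descPochhammer_natDegree 𝕜 n) (fun n => monic_descPochhammer 𝕜 n),
      ← Matrix.det_transpose]
    rfl
  rw [zpowJetMatrix_eq_diagonal_mul_mul_diagonal m hc, Matrix.det_mul, Matrix.det_mul, hpoch,
    Matrix.det_diagonal, Matrix.det_diagonal]
  refine mul_ne_zero (mul_ne_zero ?_ ?_) ?_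
  · exact Finset.prod_ne_zero_iff.2 fun n _ => zpow_ne_zero _ hc
  · exact Matrix.det_vandermonde_ne_zero_iff.2 (Int.cast_injective.comp hm)
  · exact Finset.prod_ne_zero_iff.2 fun j _ => zpow_ne_zero _ hc

end ZPowJet

/-- There exist unique coefficients a₄,…,a₁₀ such that g₀(λ) = Σ_{j=4}^{10} aⱼ/(λ-i)^j
matches the polynomial Σ_{j=0}^{6} pⱼ(λ-λ₀)^j to order 6 at λ₀, i.e. the first
seven Taylor coefficients of g₀ at λ₀ equal the pⱼ. -/
theorem stmt_14 (l₀ : ℝ) (p : Fin 7 → ℂ) :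
    ∃! a : Fin 7 → ℂ, ∀ n : Fin 7,
      iteratedDeriv (n : ℕ)
          (fun l : ℂ => ∑ j : Fin 7, a j / (l - Complex.I) ^ ((j : ℕ) + 4)) (l₀ : ℂ)
        = ((n : ℕ).factorial : ℂ) * p n := by
  set m : Fin 7 → ℤ := fun j => -((j : ℤ) + 4)
  have hm : m.Injective := fun i j h => Fin.ext (by simpa [m] using h)
  have hx : (l₀ : ℂ) ≠ I := fun h => by simpa using congrArg Complex.im h
  have hg (a : Fin 7 → ℂ) : (fun l : ℂ => ∑ j : Fin 7, a j / (l - I) ^ ((j : ℕ) + 4))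
      = fun l => ∑ j, a j * (l - I) ^ m j := by
    funext l
    simp only [m, zpow_neg, div_eq_mul_inv]
    norm_cast
  have hM : IsUnit (zpowJetMatrix m ((l₀ : ℂ) - I)) :=
    (Matrix.isUnit_iff_isUnit_det _).2 (det_zpowJetMatrix_ne_zero hm (sub_ne_zero.2 hx)).isUnit
  simp_rw [hg, iteratedDeriv_sum_zpow_sub_const hx, ← funext_iff]
  exact Function.Bijective.existsUnique
    ⟨Matrix.mulVec_injective_iff_isUnit.2 hM, Matrix.mulVec_surjective_iff_isUnit.2 hM⟩ _
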